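/- arXiv:1704.04555 — 4 statements merged into one kernel-verified Lean document; each statement's English description precedes it below -/
import Mathlib

section
/- Let σ be a set function on subsets of V, nonnegative, with σ(∅) = 0, satisfying the approximate submodular decrease condition: for all S ⊆ T and x, Δ_x σ(S) ≥ Δ_x σ(T) − ε, where Δ_x σ(S) = σ(S∪{x}) − σ(S). Suppose the greedy algorithm picks a_i maximizing Δ_{a_i}σ(A_{i−1}) at each step, and that an optimal set C of size o satisfies σ(C) ≥ P. Then P − σ(A_i) ≤ o·(σ(A_{i+1}) − σ(A_i) + ε) for all i, and consequently P − σ(A_i) ≤ P·(1 − 1/o)^i + ε·o. -/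
/-!
Telescoping the marginal gains of the elements of `C` over `A i`, and charging each of them
at most the greedy gain plus `ε`, bounds the gap `P - σ (A i)` by `o` times (greedy gain + `ε`).
So each greedy step shrinks the gap by a factor `1 - 1/o`, up to an additive `ε`, and summing
the geometric series of these errors gives at most `ε * o`.
-/

open Finset

section

variable {V : Type*} [DecidableEq V]

def IsApproxSubmodular (σ : Finset V → ℝ) (ε : ℝ) : Prop :=
  ∀ S T : Finset V, S ⊆ T → ∀ x : V, σ (insert x T) - σ T - ε ≤ σ (insert x S) - σ S

theorem IsApproxSubmodular.apply_union_le {σ : Finset V → ℝ} {ε : ℝ}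
    (hσ : IsApproxSubmodular σ ε) (S C : Finset V) :
    σ (S ∪ C) ≤ σ S + ∑ c ∈ C, (σ (insert c S) - σ S + ε) := by
  induction C using Finset.induction_on with
  | empty => simp
  | @insert x C hx ih =>
    have hgain := hσ S (S ∪ C) subset_union_left x
    rw [union_insert, sum_insert hx]
    linarith

theorem IsApproxSubmodular.sub_le_card_mul {σ : Finset V → ℝ} {ε P g : ℝ}
    (hσ : IsApproxSubmodular σ ε) (hmono : ∀ S T : Finset V, S ⊆ T → σ S ≤ σ T)
    {S C : Finset V} (hC : P ≤ σ C) (hg : ∀ x, σ (insert x S) - σ S ≤ g) :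
    P - σ S ≤ #C * (g + ε) := by
  have hPC : P ≤ σ (S ∪ C) := hC.trans (hmono _ _ subset_union_right)
  have hsum : ∑ c ∈ C, (σ (insert c S) - σ S + ε) ≤ #C • (g + ε) :=
    sum_le_card_nsmul _ _ _ fun x _ => by linarith [hg x]
  rw [nsmul_eq_mul] at hsum
  linarith [hσ.apply_union_le S C]

theorem le_geom_add_of_le_mul_sub_succ {d : ℕ → ℝ} {o ε D : ℝ} (ho : 1 ≤ o) (hε : 0 ≤ ε)
    (hd0 : d 0 ≤ D) (hstep : ∀ i, d i ≤ o * (d i - d (i + 1) + ε)) (i : ℕ) :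
    d i ≤ D * (1 - 1 / o) ^ i + ε * o := by
  have ho₀ : 0 < o := by linarith
  have hr : 0 ≤ 1 - 1 / o := by
    rw [sub_nonneg, div_le_one ho₀]
    exact ho
  have hcontract : ∀ i, d (i + 1) ≤ (1 - 1 / o) * d i + ε := by
    intro i
    have h : o * d (i + 1) ≤ o * ((1 - 1 / o) * d i + ε) := by
      have : o * ((1 - 1 / o) * d i + ε) = o * d i - d i + o * ε := by
        field_simp
      linarith [hstep i]
    exact le_of_mul_le_mul_left h ho₀
  induction i with
  | zero => simpa using hd0.trans (le_add_of_nonneg_right (mul_nonneg hε ho₀.le))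
  | succ i ih =>
    calc d (i + 1) ≤ (1 - 1 / o) * d i + ε := hcontract i
      _ ≤ (1 - 1 / o) * (D * (1 - 1 / o) ^ i + ε * o) + ε := by gcongr
      _ = D * (1 - 1 / o) ^ (i + 1) + ε * o := by
        have hro : (1 - 1 / o) * o = o - 1 := by field_simp
        rw [pow_succ]
        linear_combination ε * hro

end

theorem stmt11_general {V : Type*} [DecidableEq V]
    (σ : Finset V → ℝ) (ε P : ℝ)
    (hσ0 : σ ∅ = 0)
    (hmono : ∀ S T : Finset V, S ⊆ T → σ S ≤ σ T)
    (hε : 0 ≤ ε)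
    (hsub : ∀ S T : Finset V, S ⊆ T → ∀ x : V,
      σ (insert x T) - σ T - ε ≤ σ (insert x S) - σ S)
    (A : ℕ → Finset V) (hA0 : A 0 = ∅)
    (hgreedy : ∀ i, ∀ x : V, σ (insert x (A i)) - σ (A i) ≤ σ (A (i + 1)) - σ (A i))
    (C : Finset V) (o : ℕ) (ho : 1 ≤ o) (hCcard : C.card = o) (hC : P ≤ σ C) :
    (∀ i, P - σ (A i) ≤ o * (σ (A (i + 1)) - σ (A i) + ε))
    ∧ ∀ i, P - σ (A i) ≤ P * (1 - 1 / (o : ℝ)) ^ i + ε * o := by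
  have hstep (i : ℕ) : P - σ (A i) ≤ o * (σ (A (i + 1)) - σ (A i) + ε) := by
    simpa [hCcard] using IsApproxSubmodular.sub_le_card_mul hsub hmono hC (hgreedy i)
  refine ⟨hstep, le_geom_add_of_le_mul_sub_succ (d := fun i => P - σ (A i))
    (by exact_mod_cast ho) hε (by simp [hA0, hσ0]) fun i => ?_⟩
  linarith [hstep i]

/-- greedy analysis under approximate submodularity. If `σ` is a
nonnegative monotone set function with `σ(∅)=0` and
`Δ_x σ(S) ≥ Δ_x σ(T) − ε` for all `S ⊆ T`, the greedy sequence `A_i` picks at each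
step an element maximizing the marginal gain, and an optimal set `C` of size `o`
satisfies `σ(C) ≥ P`, then `P − σ(A_i) ≤ o·(σ(A_{i+1}) − σ(A_i) + ε)` for all `i`,
and consequently `P − σ(A_i) ≤ P·(1 − 1/o)^i + ε·o`. -/
theorem stmt11 {V : Type*} [DecidableEq V] [Fintype V]
    (σ : Finset V → ℝ) (ε P : ℝ)
    (hσ0 : σ ∅ = 0) (hσnn : ∀ S, 0 ≤ σ S)
    (hmono : ∀ S T : Finset V, S ⊆ T → σ S ≤ σ T)
    (hε : 0 ≤ ε)
    (hsub : ∀ S T : Finset V, S ⊆ T → ∀ x : V,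
      σ (insert x T) - σ T - ε ≤ σ (insert x S) - σ S)
    (a : ℕ → V) (A : ℕ → Finset V) (hA0 : A 0 = ∅)
    (hAs : ∀ i, A (i + 1) = insert (a (i + 1)) (A i))
    (hgreedy : ∀ i, ∀ x : V, σ (insert x (A i)) - σ (A i) ≤ σ (A (i + 1)) - σ (A i))
    (C : Finset V) (o : ℕ) (ho : 1 ≤ o) (hCcard : C.card = o) (hC : P ≤ σ C) :
    (∀ i, P - σ (A i) ≤ o * (σ (A (i + 1)) - σ (A i) + ε))
    ∧ ∀ i, P - σ (A i) ≤ P * (1 - 1 / (o : ℝ)) ^ i + ε * o :=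
  stmt11_general σ ε P hσ0 hmono hε hsub A hA0 hgreedy C o ho hCcard hC
end

section
/- With the assumptions of the previous greedy analysis, if i is the smallest index such that P − σ(A_{i+1}) < o(1 + ε') (where ε' = ε/1 in appropriate scaling) while P − σ(A_i) ≥ o(1 + ε'), then i ≤ o·log(P/o), since o ≤ P·exp(−i/o) + ε·o implies o(1+ε') − εo ≤ P·e^{−i/o}. -/
/-- in the greedy analysis, writing `Sσ i` for `σ(A_i)`, if
`P − σ(A_i) ≤ P(1 − 1/o)^i + ε·o` and also `P − σ(A_i) ≥ o(1 + ε)`, then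
`o ≤ P·exp(−i/o)`-style rearrangement gives `i ≤ o·log(P/o)`. -/
theorem stmt12 (P ε : ℝ) (o i : ℕ) (ho : 1 ≤ o) (hP : 0 < P) (hε : 0 ≤ ε)
    (Sσ : ℕ → ℝ)
    (hbound : P - Sσ i ≤ P * (1 - 1 / (o : ℝ)) ^ i + ε * o)
    (hi : (o : ℝ) * (1 + ε) ≤ P - Sσ i) :
    (i : ℝ) ≤ o * Real.log (P / o) := by
  have ho' : (1 : ℝ) ≤ o := by exact_mod_cast ho
  have ho0 : (0 : ℝ) < o := lt_of_lt_of_le one_pos ho'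
  have h1 : (o : ℝ) ≤ P * (1 - 1 / (o : ℝ)) ^ i := by nlinarith
  have hb : (1 - 1 / (o : ℝ)) ^ i ≤ Real.exp (-(1 / o)) ^ i := by
    apply pow_le_pow_left₀
    · have : 1 / (o : ℝ) ≤ 1 := by
        rw [div_le_one ho0]; exact ho'
      linarith
    · linarith [Real.add_one_le_exp (-(1 / (o : ℝ)))]
  have h2 : (o : ℝ) ≤ P * Real.exp (-(i / o)) := by
    calc (o : ℝ) ≤ P * (1 - 1 / (o : ℝ)) ^ i := h1
    _ ≤ P * Real.exp (-(1 / o)) ^ i := by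
        exact mul_le_mul_of_nonneg_left hb hP.le
    _ = P * Real.exp (-(i / o)) := by
        rw [← Real.exp_nat_mul]; ring_nf
  have hexp : Real.exp ((i : ℝ) / o) ≤ P / o := by
    rw [le_div_iff₀ ho0]
    have h3 := mul_le_mul_of_nonneg_right h2 (Real.exp_pos ((i : ℝ) / o)).le
    rw [Real.exp_neg, mul_assoc, inv_mul_cancel₀ (Real.exp_ne_zero _), mul_one] at h3
    linarith
  have hlog : (i : ℝ) / o ≤ Real.log (P / o) :=
    (Real.le_log_iff_exp_le (by positivity)).2 hexp
  calc (i : ℝ) = o * ((i : ℝ) / o) := by field_simp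
  _ ≤ o * Real.log (P / o) := mul_le_mul_of_nonneg_left hlog ho0.le
end

section
/- Let H = (V, E_H) be an undirected graph on vertex set V = {1,...,n}, and let G be the complete graph on V with unit edge lengths. Set S = E_H (as a set of vertex pairs) and fix T ≥ 1. Then a set W ⊆ V is a vertex cover of H if and only if removing W from G makes d(u,v) > T for every pair (u,v) ∈ S. Hence the minimum vertex cover size of H equals the minimum size of a T-MULTI-PCUT solution on this instance. -/
/-! In the complete graph every `H`-edge `uv` with `u, v ∉ W` is itself a path of length
`1 ≤ T`, while if `u ∈ W` or `v ∈ W` there is no path from `u` to `v` avoiding `W` at all.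
So the cut condition is exactly the vertex-cover condition, and the two minima range over
the same sets. -/

def pathWeight {V : Type*} (w : V → V → ℝ) (p : List V) : ℝ :=
  ((p.zip p.tail).map fun q => w q.1 q.2).sum

def IsPath {V : Type*} (E : V → V → Prop) (s t : V) (p : List V) : Prop :=
  p ≠ [] ∧ p.head? = some s ∧ p.getLast? = some t ∧ p.Chain' E ∧ p.Nodup

section IsPath

variable {V : Type*} {E : V → V → Prop} {s t : V} {p : List V}

theorem IsPath.reverse (hp : IsPath E s t p) : IsPath (flip E) t s p.reverse := by
  obtain ⟨hne, hhead, hlast, hchain, hnodup⟩ := hp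
  exact ⟨by simpa using hne, by simpa using hlast, by simpa using hhead,
    List.isChain_reverse.mpr hchain, List.nodup_reverse.mpr hnodup⟩

theorem IsPath.exists_rel_left (hp : IsPath E s t p) (hst : s ≠ t) : ∃ b, E s b := by
  obtain ⟨_, hhead, hlast, hchain, _⟩ := hp
  match p, hhead, hlast, hchain with
  | [a], hhead, hlast, _ =>
    simp only [List.head?_cons, List.getLast?_singleton, Option.some_inj] at hhead hlast
    exact absurd (hhead.symm.trans hlast) hst
  | a :: b :: _, hhead, _, hchain =>
    obtain rfl : a = s := Option.some_inj.mp hhead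
    exact ⟨b, (List.isChain_cons_cons.mp hchain).1⟩

theorem IsPath.exists_rel_right (hp : IsPath E s t p) (hst : s ≠ t) : ∃ a, E a t :=
  hp.reverse.exists_rel_left hst.symm

theorem isPath_pair (hst : s ≠ t) (hE : E s t) : IsPath E s t [s, t] :=
  ⟨List.cons_ne_nil _ _, rfl, rfl, List.isChain_pair.mpr hE, by simpa using hst⟩

end IsPath

theorem pathWeight_pair {V : Type*} (w : V → V → ℝ) (s t : V) :
    pathWeight w [s, t] = w s t := by
  simp [pathWeight]

theorem not_isPath_avoiding {V : Type*} {W : Finset V} {u v : V} {q : List V}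
    (huv : u ≠ v) (hW : u ∈ W ∨ v ∈ W) :
    ¬ IsPath (fun a b => a ≠ b ∧ a ∉ W ∧ b ∉ W) u v q := by
  intro hq
  obtain ⟨_, _, hu, _⟩ := hq.exists_rel_left huv
  obtain ⟨_, _, _, hv⟩ := hq.exists_rel_right huv
  exact hW.elim hu hv

theorem isVertexCover_iff_forall_isPath_lt_pathWeight {V : Type*} (H : SimpleGraph V)
    {T : ℝ} (hT : 1 ≤ T) (W : Finset V) :
    (∀ u v : V, H.Adj u v → u ∈ W ∨ v ∈ W) ↔
      ∀ u v : V, H.Adj u v → ∀ q : List V,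
        IsPath (fun a b => a ≠ b ∧ a ∉ W ∧ b ∉ W) u v q →
        T < pathWeight (fun _ _ => (1 : ℝ)) q := by
  refine ⟨fun hcov u v huv q hq => absurd hq (not_isPath_avoiding huv.ne (hcov u v huv)),
    fun hcut u v huv => ?_⟩
  by_contra! hmem
  have h := hcut u v huv [u, v] (isPath_pair huv.ne ⟨huv.ne, hmem⟩)
  rw [pathWeight_pair] at h
  linarith

theorem stmt13_general {V : Type*}
    (H : SimpleGraph V) (T : ℝ) (hT : 1 ≤ T) :
    (∀ W : Finset V,
      ((∀ u v : V, H.Adj u v → u ∈ W ∨ v ∈ W)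
        ↔ (∀ u v : V, H.Adj u v → ∀ q : List V,
            IsPath (fun a b => a ≠ b ∧ a ∉ W ∧ b ∉ W) u v q →
            T < pathWeight (fun _ _ => (1 : ℝ)) q)))
    ∧ sInf {m : ℕ | ∃ W : Finset V,
          (∀ u v : V, H.Adj u v → u ∈ W ∨ v ∈ W) ∧ W.card = m}
      = sInf {m : ℕ | ∃ W : Finset V,
          (∀ u v : V, H.Adj u v → ∀ q : List V,
            IsPath (fun a b => a ≠ b ∧ a ∉ W ∧ b ∉ W) u v q →
            T < pathWeight (fun _ _ => (1 : ℝ)) q) ∧ W.card = m} := by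
  have key := isVertexCover_iff_forall_isPath_lt_pathWeight H hT
  exact ⟨key, by simp only [key]⟩

/-- let `H` be a graph on `V` and `G` the complete graph on `V` with
unit edge lengths, target set `S = E(H)`, and `T ≥ 1`. Then `W` is a vertex cover of
`H` iff removing `W` from `G` makes every remaining path between the endpoints of an
edge of `H` longer than `T` (i.e. `d(u,v) > T`); hence the minimum vertex-cover size
equals the minimum T-MULTI-PCUT size. -/
theorem stmt13 {V : Type*} [Fintype V] [DecidableEq V]
    (H : SimpleGraph V) (T : ℝ) (hT : 1 ≤ T) :
    (∀ W : Finset V,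
      ((∀ u v : V, H.Adj u v → u ∈ W ∨ v ∈ W)
        ↔ (∀ u v : V, H.Adj u v → ∀ q : List V,
            IsPath (fun a b => a ≠ b ∧ a ∉ W ∧ b ∉ W) u v q →
            T < pathWeight (fun _ _ => (1 : ℝ)) q)))
    ∧ sInf {m : ℕ | ∃ W : Finset V,
          (∀ u v : V, H.Adj u v → u ∈ W ∨ v ∈ W) ∧ W.card = m}
      = sInf {m : ℕ | ∃ W : Finset V,
          (∀ u v : V, H.Adj u v → ∀ q : List V,
            IsPath (fun a b => a ≠ b ∧ a ∉ W ∧ b ∉ W) u v q →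
            T < pathWeight (fun _ _ => (1 : ℝ)) q) ∧ W.card = m} :=
  stmt13_general H T hT
end

section
/- In the tight-example construction for GEN with parameter k: graph G contains s, t, gate vertices g_1,...,g_k with edges (s,g_i), vertices o_1, o_2 with edges (o_j,t), and for each i, 2^{i−1} internally disjoint length-2 paths from g_i to each of o_1 and o_2 (unit lengths). Then {o_1, o_2} is a feasible 5-pseudocut of size 2 (removing o_1,o_2 makes d(s,t) = ∞ > 5), while in the uncovered-paths greedy order the vertex g_k covers 2·2^{k−1} paths of length ≤ 5, strictly more than any o_j covers (2^k − 1 < 2^k), so greedy first picks g_k; inductively greedy selects g_k, g_{k−1}, ..., g_1, returning a solution of size k = Ω(log n) times optimal. -/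
/-- Vertices of the tight example: `s`, `t`, gates `g₁,…,g_k`, vertices `o₁,o₂`,
and for gate `g i` (0-indexed, so `2^i` paths to each `o j`) the middle vertices of
the internally disjoint length-2 connections. -/
inductive TightV (k : ℕ) where
  | s : TightV k
  | t : TightV k
  | g (i : Fin k) : TightV k
  | o (j : Fin 2) : TightV k
  | mid (i : Fin k) (j : Fin 2) (c : Fin (2 ^ (i : ℕ))) : TightV k

/-- Edges of the tight example (unit lengths): `s → g i → mid i j c → o j → t`. -/
def TE {k : ℕ} : TightV k → TightV k → Prop
  | .s, .g _ => True
  | .g i, .mid i' _ _ => i = i'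
  | .mid _ j _, .o j' => j = j'
  | .o _, .t => True
  | _, _ => False

/-- Number of uncovered (by `W`) s-t paths of length ≤ 5 containing vertex `v`. -/
noncomputable def cnt (k : ℕ) (W : Set (TightV k)) (v : TightV k) : ℕ :=
  {q : List (TightV k) | IsPath TE TightV.s TightV.t q ∧
    pathWeight (fun _ _ => (1 : ℝ)) q ≤ 5 ∧ (∀ x ∈ W, x ∉ q) ∧ v ∈ q}.ncard

theorem IsPath.mono {V : Type*} {E E' : V → V → Prop} {s t : V} {p : List V}
    (hE : ∀ a b, E a b → E' a b) (hp : IsPath E s t p) : IsPath E' s t p :=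
  ⟨hp.1, hp.2.1, hp.2.2.1, hp.2.2.2.1.imp fun _ _ => hE _ _, hp.2.2.2.2⟩

namespace TightV

variable {k : ℕ}

abbrev RouteIndex (k : ℕ) := Σ i : Fin k, Fin 2 × Fin (2 ^ (i : ℕ))

def route (x : RouteIndex k) : List (TightV k) :=
  [s, g x.1, mid x.1 x.2.1 x.2.2, o x.2.1, t]

@[simp] theorem mem_route_g {i : Fin k} {x : RouteIndex k} : g i ∈ route x ↔ x.1 = i := by
  simp [route, eq_comm]

@[simp] theorem mem_route_o {j : Fin 2} {x : RouteIndex k} : o j ∈ route x ↔ x.2.1 = j := by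
  simp [route, eq_comm]

@[simp] theorem mem_route_mid {i : Fin k} {j : Fin 2} {c : Fin (2 ^ (i : ℕ))} {x : RouteIndex k} :
    mid i j c ∈ route x ↔ x = ⟨i, j, c⟩ := by
  obtain ⟨i', j', c'⟩ := x
  simp only [route, List.mem_cons, List.not_mem_nil, or_false, mid.injEq, reduceCtorEq, false_or]
  constructor
  · rintro ⟨rfl, rfl, hc⟩
    rw [eq_of_heq hc]
  · rintro ⟨⟩
    exact ⟨rfl, rfl, HEq.rfl⟩

theorem route_injective : Function.Injective (route (k := k)) := fun _ _ h =>
  mem_route_mid.mp (h ▸ mem_route_mid.mpr rfl)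

theorem isPath_route (x : RouteIndex k) : IsPath TE s t (route x) := by
  refine ⟨by simp [route], rfl, rfl, ?_, ?_⟩
  · show List.IsChain TE _
    simp [route, TE]
  · simp [route]
theorem exists_eq_g_of_TE_s {b : TightV k} (h : TE s b) : ∃ i, b = g i := by
  cases b <;> simp_all [TE]

theorem exists_eq_mid_of_TE_g {i : Fin k} {b : TightV k} (h : TE (g i) b) :
    ∃ j c, b = mid i j c := by
  cases b with
  | mid i' j c => cases h; exact ⟨j, c, rfl⟩
  | _ => cases h

theorem eq_o_of_TE_mid {i : Fin k} {j : Fin 2} {c : Fin (2 ^ (i : ℕ))} {b : TightV k}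
    (h : TE (mid i j c) b) : b = o j := by
  cases b <;> simp_all [TE]

theorem eq_t_of_TE_o {j : Fin 2} {b : TightV k} (h : TE (o j) b) : b = t := by
  cases b <;> simp_all [TE]

theorem not_TE_t (b : TightV k) : ¬ TE t b := by
  cases b <;> simp [TE]

theorem eq_nil_of_isChain_t {l : List (TightV k)} (hc : List.IsChain TE (t :: l)) : l = [] := by
  rcases l with _ | ⟨b, l⟩
  · rfl
  · exact absurd (List.isChain_cons_cons.mp hc).1 (not_TE_t b)

theorem eq_of_isChain_o {j : Fin 2} {l : List (TightV k)} (hc : List.IsChain TE (o j :: l))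
    (ht : (o j :: l).getLast? = some t) : l = [t] := by
  rcases l with _ | ⟨b, l⟩
  · simp at ht
  · obtain ⟨hb, hc⟩ := List.isChain_cons_cons.mp hc
    obtain rfl := eq_t_of_TE_o hb
    rw [eq_nil_of_isChain_t hc]

theorem eq_of_isChain_mid {i : Fin k} {j : Fin 2} {c : Fin (2 ^ (i : ℕ))} {l : List (TightV k)}
    (hc : List.IsChain TE (mid i j c :: l)) (ht : (mid i j c :: l).getLast? = some t) :
    l = [o j, t] := by
  rcases l with _ | ⟨b, l⟩
  · simp at ht
  · obtain ⟨hb, hc⟩ := List.isChain_cons_cons.mp hc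
    obtain rfl := eq_o_of_TE_mid hb
    rw [eq_of_isChain_o hc (by simpa using ht)]

theorem exists_eq_of_isChain_g {i : Fin k} {l : List (TightV k)}
    (hc : List.IsChain TE (g i :: l)) (ht : (g i :: l).getLast? = some t) :
    ∃ j c, l = [mid i j c, o j, t] := by
  rcases l with _ | ⟨b, l⟩
  · simp at ht
  · obtain ⟨hb, hc⟩ := List.isChain_cons_cons.mp hc
    obtain ⟨j, c, rfl⟩ := exists_eq_mid_of_TE_g hb
    exact ⟨j, c, by rw [eq_of_isChain_mid hc (by simpa using ht)]⟩

theorem eq_route_of_isPath {q : List (TightV k)} (hq : IsPath TE s t q) :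
    ∃ x, q = route x := by
  obtain ⟨-, hs, ht, hc, -⟩ := hq
  rcases q with _ | ⟨a, _ | ⟨b, l⟩⟩
  · simp at hs
  · simp_all
  · obtain rfl : a = s := by simpa using hs
    obtain ⟨hb, hc⟩ := List.isChain_cons_cons.mp hc
    obtain ⟨i, rfl⟩ := exists_eq_g_of_TE_s hb
    obtain ⟨j, c, rfl⟩ := exists_eq_of_isChain_g hc (by simpa using ht)
    exact ⟨⟨i, j, c⟩, rfl⟩

@[simp] theorem pathWeight_route (x : RouteIndex k) :
    pathWeight (fun _ _ => (1 : ℝ)) (route x) = 4 := by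
  norm_num [pathWeight, route]

theorem not_isPath_avoiding_o (q : List (TightV k)) :
    ¬ IsPath (fun a b => TE a b ∧ (∀ j, a ≠ o j) ∧ (∀ j, b ≠ o j)) s t q := by
  intro hq
  obtain ⟨x, rfl⟩ := eq_route_of_isPath (hq.mono fun _ _ h => h.1)
  have hc : List.IsChain _ (route x) := hq.2.2.2.1
  simp only [route, List.isChain_cons_cons] at hc
  exact hc.2.2.1.2.2 x.2.1 rfl

theorem cnt_eq_card (W : Set (TightV k)) (v : TightV k) :
    cnt k W v = Nat.card {x : RouteIndex k // (∀ w ∈ W, w ∉ route x) ∧ v ∈ route x} := by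
  have hset : {q : List (TightV k) | IsPath TE s t q ∧
      pathWeight (fun _ _ => (1 : ℝ)) q ≤ 5 ∧ (∀ x ∈ W, x ∉ q) ∧ v ∈ q}
      = route '' {x | (∀ w ∈ W, w ∉ route x) ∧ v ∈ route x} := by
    ext q
    constructor
    · rintro ⟨hq, -, hW, hv⟩
      obtain ⟨x, rfl⟩ := eq_route_of_isPath hq
      exact ⟨x, ⟨hW, hv⟩, rfl⟩
    · rintro ⟨x, ⟨hW, hv⟩, rfl⟩
      exact ⟨isPath_route x, by norm_num, hW, hv⟩
  rw [cnt, hset, Set.ncard_image_of_injective _ route_injective, ← Nat.card_coe_set_eq]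
  rfl

def gatesFrom (k B : ℕ) : Set (TightV k) := {x | ∃ i : Fin k, x = g i ∧ B ≤ (i : ℕ)}

theorem gatesFrom_self : gatesFrom k k = ∅ :=
  Set.eq_empty_of_forall_notMem fun _ ⟨i, _, hi⟩ => (i.isLt.trans_le hi).false

theorem cnt_gatesFrom (B : ℕ) (v : TightV k) :
    cnt k (gatesFrom k B) v = Nat.card {x : RouteIndex k // (x.1 : ℕ) < B ∧ v ∈ route x} := by
  rw [cnt_eq_card]
  refine Nat.card_congr (Equiv.subtypeEquivRight fun x => and_congr_left fun _ => ?_)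
  constructor
  · intro h
    by_contra! hB
    exact h (g x.1) ⟨x.1, rfl, hB⟩ (mem_route_g.mpr rfl)
  · rintro h _ ⟨i, rfl, hi⟩ hx
    rw [mem_route_g] at hx
    subst hx
    omega

theorem cnt_gatesFrom_g (B : ℕ) (i : Fin k) :
    cnt k (gatesFrom k B) (g i) = if (i : ℕ) < B then 2 ^ ((i : ℕ) + 1) else 0 := by
  simp only [cnt_gatesFrom, mem_route_g]
  rw [Nat.card_eq_fintype_card, Fintype.card_subtype, Finset.card_filter, Fintype.sum_sigma]
  simp [and_comm (b := _ = _), ite_and, pow_succ, mul_comm]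

theorem cnt_gatesFrom_o {B : ℕ} (hB : B ≤ k) (j : Fin 2) :
    cnt k (gatesFrom k B) (o j) = 2 ^ B - 1 := by
  have hinner (i : Fin k) : ∑ y : Fin 2 × Fin (2 ^ (i : ℕ)),
      (if (i : ℕ) < B ∧ y.1 = j then 1 else 0) = if (i : ℕ) < B then 2 ^ (i : ℕ) else 0 := by
    split_ifs with hi <;>
      simp [hi, ← Finset.univ_product_univ, Finset.filter_product_left (· = j), Finset.filter_eq']
  have hrange : (Finset.range k).filter (· < B) = Finset.range B := by
    ext; simp only [Finset.mem_filter, Finset.mem_range]; omega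
  simp only [cnt_gatesFrom, mem_route_o]
  rw [Nat.card_eq_fintype_card, Fintype.card_subtype, Finset.card_filter, Fintype.sum_sigma]
  simp only [hinner]
  rw [Fin.sum_univ_eq_sum_range (fun i => if i < B then 2 ^ i else 0), ← Finset.sum_filter,
    hrange, Nat.geomSum_eq le_rfl, Nat.div_one]

theorem cnt_gatesFrom_mid_le_one (B : ℕ) (i : Fin k) (j : Fin 2) (c : Fin (2 ^ (i : ℕ))) :
    cnt k (gatesFrom k B) (mid i j c) ≤ 1 := by
  rw [cnt_gatesFrom, Finite.card_le_one_iff_subsingleton]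
  constructor
  rintro ⟨x, -, hx⟩ ⟨y, -, hy⟩
  rw [mem_route_mid] at hx hy
  subst hx hy
  rfl

theorem cnt_gatesFrom_lt_cnt_g {B : ℕ} (i : Fin k) (hi : (i : ℕ) + 1 = B)
    {v : TightV k} (hs : v ≠ s) (ht : v ≠ t) (hg : v ≠ g i) :
    cnt k (gatesFrom k B) v < cnt k (gatesFrom k B) (g i) := by
  have hB : B ≤ k := hi ▸ i.isLt
  rw [cnt_gatesFrom_g, if_pos (by omega), hi]
  cases v with
  | s => exact absurd rfl hs
  | t => exact absurd rfl ht
  | g i' =>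
    have hi' : (i' : ℕ) ≠ i := fun h => hg (congrArg g (Fin.ext h))
    rw [cnt_gatesFrom_g]
    split_ifs with hlt
    · exact Nat.pow_lt_pow_right one_lt_two (by omega)
    · exact Nat.two_pow_pos B
  | o j =>
    rw [cnt_gatesFrom_o hB]
    exact Nat.sub_lt (Nat.two_pow_pos B) one_pos
  | mid i' j c =>
    calc cnt k (gatesFrom k B) (mid i' j c) ≤ 1 := cnt_gatesFrom_mid_le_one B i' j c
      _ < 2 ^ B := Nat.one_lt_two_pow (by omega)

theorem exists_g_mem_of_isPath {q : List (TightV k)} (hq : IsPath TE s t q) : ∃ i, g i ∈ q := by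
  obtain ⟨x, rfl⟩ := eq_route_of_isPath hq
  exact ⟨x.1, mem_route_g.mpr rfl⟩

end TightV

-- `k + 4 + 2 (2 ^ k - 1)` is the number of vertices of `TightV k`.
theorem logb_numVertices_le (k : ℕ) : Real.logb 2 ((k : ℝ) + 4 + 2 * (2 ^ k - 1)) ≤ k + 3 := by
  have hk0 : (0 : ℝ) ≤ k := k.cast_nonneg
  have hk : (k : ℝ) + 1 ≤ 2 ^ k := by exact_mod_cast Nat.lt_two_pow_self
  calc Real.logb 2 ((k : ℝ) + 4 + 2 * (2 ^ k - 1))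
      ≤ Real.logb 2 (2 ^ (k + 3)) :=
        Real.logb_le_logb_of_le one_lt_two (by linarith) (by rw [pow_add]; linarith)
    _ = k + 3 := by
        rw [Real.logb_pow, Real.logb_self_eq_one one_lt_two]
        push_cast
        ring

/-- in the tight example for GEN with parameter `k` and `T = 5`:
`{o₁,o₂}` is a feasible 5-pseudocut of size 2 (after its removal no s-t path
remains, vacuously all remaining paths are longer than 5); gate `g i` lies on
`2^{i+1}` short s-t paths while `o j` lies on `2^k − 1 < 2^k` of them; at each
greedy step `m < k`, after the gates `g_{k-1},…,g_{k-m}` have been selected, the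
gate `g_{k-1-m}` covers strictly more uncovered short paths than any other
selectable vertex, so greedy selects `g_{k-1},…,g₀`, a solution of size `k`; every
short s-t path goes through some gate (so greedy stops after the `k` gates); and
`k ≥ log₂ n − 3` where `n = k + 4 + 2(2^k − 1)` is the number of vertices, so the
greedy solution is `Ω(log n)` times the optimal size 2. -/
theorem stmt17 (k : ℕ) :
    (∀ q : List (TightV k),
        IsPath (fun a b => TE a b ∧ (∀ j, a ≠ TightV.o j) ∧ (∀ j, b ≠ TightV.o j))
          TightV.s TightV.t q →
        (5 : ℝ) < pathWeight (fun _ _ => (1 : ℝ)) q)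
    ∧ (∀ i : Fin k, cnt k ∅ (TightV.g i) = 2 ^ ((i : ℕ) + 1))
    ∧ (∀ j : Fin 2, cnt k ∅ (TightV.o j) = 2 ^ k - 1)
    ∧ (∀ m : ℕ, ∀ hm : m < k, ∀ v : TightV k,
        v ≠ TightV.s → v ≠ TightV.t → v ≠ TightV.g ⟨k - 1 - m, by omega⟩ →
        cnt k {x | ∃ i : Fin k, x = TightV.g i ∧ k - m ≤ (i : ℕ)} v
          < cnt k {x | ∃ i : Fin k, x = TightV.g i ∧ k - m ≤ (i : ℕ)}
              (TightV.g ⟨k - 1 - m, by omega⟩))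
    ∧ (∀ q : List (TightV k), IsPath TE TightV.s TightV.t q →
        pathWeight (fun _ _ => (1 : ℝ)) q ≤ 5 → ∃ i : Fin k, TightV.g i ∈ q)
    ∧ (k : ℝ) ≥ Real.logb 2 ((k : ℝ) + 4 + 2 * (2 ^ k - 1)) - 3 := by
  refine ⟨fun q hq => absurd hq (TightV.not_isPath_avoiding_o q), fun i => ?_, fun j => ?_,
    fun m hm v hs ht hg => ?_, fun q hq _ => TightV.exists_g_mem_of_isPath hq, ?_⟩
  · rw [← TightV.gatesFrom_self, TightV.cnt_gatesFrom_g, if_pos i.isLt]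
  · rw [← TightV.gatesFrom_self, TightV.cnt_gatesFrom_o le_rfl]
  · exact TightV.cnt_gatesFrom_lt_cnt_g _ (by simp; omega) hs ht hg
  · linarith [logb_numVertices_le k]
end
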